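/- Let R : ℕ → ℝ satisfy R(1) = 1 and, for all n ≥ 2, R(n) = 1 + (1/H_n)·Σ_{k=1}^{n−1} R(k)/(n − k). Then for all n ≥ 40, (100/383)·H_n² ≤ R(n) ≤ (5/7)·H_n². -/
import Mathlib


open Finset
/-- The `n`-th harmonic number `H_n = ∑_{k=1}^n 1/k`, with `H 0 = 0`. -/
noncomputable def H (n : ℕ) : ℝ := ∑ k ∈ Finset.Icc 1 n, (1 : ℝ) / k
noncomputable def H2 (n : ℕ) : ℝ := ∑ k ∈ Finset.Icc 1 n, (1 : ℝ) / (k:ℝ)^2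

lemma sum_reflect (n : ℕ) (f g : ℕ → ℝ) (h : ∀ k ∈ Finset.Icc 1 n, f k = g (n + 1 - k)) :
    ∑ k ∈ Finset.Icc 1 n, f k = ∑ j ∈ Finset.Icc 1 n, g j := by
  apply Finset.sum_nbij' (i := fun k => n + 1 - k) (j := fun k => n + 1 - k)
  · intro a ha; simp only [Finset.mem_Icc] at *; omega
  · intro a ha; simp only [Finset.mem_Icc] at *; omega
  · intro a ha; simp only [Finset.mem_Icc] at ha; omega
  · intro a ha; simp only [Finset.mem_Icc] at ha; omega
  · intro a ha; exact h a ha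

lemma H_succ (n : ℕ) : H (n+1) = H n + 1/((n:ℝ)+1) := by
  rw [H, H, Finset.sum_Icc_succ_top (by omega)]; push_cast; ring

lemma H2_succ (n : ℕ) : H2 (n+1) = H2 n + 1/((n:ℝ)+1)^2 := by
  rw [H2, H2, Finset.sum_Icc_succ_top (by omega)]; push_cast; ring

lemma H_one : H 1 = 1 := by simp [H]
lemma H2_one : H2 1 = 1 := by simp [H2]

lemma sum_Icc1 (f : ℕ → ℝ) (n : ℕ) : ∑ k ∈ Finset.Icc 1 n, f k = ∑ k ∈ Finset.range n, f (k+1) := by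
  induction n with
  | zero => simp
  | succ m ih => rw [Finset.sum_Icc_succ_top (by omega), ih, Finset.sum_range_succ]

lemma H_mono {m n : ℕ} (h : m ≤ n) : H m ≤ H n :=
  Finset.sum_le_sum_of_subset_of_nonneg (Finset.Icc_subset_Icc_right h) (by intros; positivity)

lemma H2_mono {m n : ℕ} (h : m ≤ n) : H2 m ≤ H2 n :=
  Finset.sum_le_sum_of_subset_of_nonneg (Finset.Icc_subset_Icc_right h) (by intros; positivity)

lemma H_ge_one {n : ℕ} (h : 1 ≤ n) : 1 ≤ H n := H_one ▸ H_mono h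

lemma H_pos {n : ℕ} (h : 1 ≤ n) : 0 < H n := lt_of_lt_of_le one_pos (H_ge_one h)

/-- Sum over Icc 1 n of 1/(n+2-j) equals H (n+1) - 1. -/
lemma aux_sum (n : ℕ) : ∑ j ∈ Finset.Icc 1 n, 1/((n:ℝ) + 2 - (j:ℝ)) = H (n+1) - 1 := by
  have e1 : ∑ j ∈ Finset.Icc 1 n, 1/((n:ℝ) + 2 - (j:ℝ)) = ∑ j ∈ Finset.Icc 1 n, 1/((j:ℝ)+1) := by
    apply sum_reflect
    intro k hk
    simp only [Finset.mem_Icc] at hk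
    have : ((n + 1 - k : ℕ) : ℝ) = (n:ℝ) + 1 - k := by
      have : k ≤ n + 1 := by omega
      push_cast [Nat.cast_sub this]; ring
    rw [this]; ring_nf
  rw [e1, sum_Icc1 (fun j => 1/((j:ℝ)+1)) n]
  have e2 : H (n+1) = ∑ k ∈ Finset.range (n+1), (1:ℝ)/((k:ℝ)+1) := by
    rw [H, sum_Icc1 (fun k => (1:ℝ)/(k:ℝ)) (n+1)]; push_cast; rfl
  rw [e2, Finset.sum_range_succ' (fun k => (1:ℝ)/((k:ℝ)+1)) n]
  push_cast
  have : ∀ x ∈ Finset.range n, (1:ℝ)/((x:ℝ)+1+1) = 1/((x:ℝ)+2) := by intros; ring_nf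
  rw [Finset.sum_congr rfl this]; ring

/-- Key identity: ∑_{j=1}^{n} H(n+1-j)/j = H(n+1)^2 - H2(n+1). -/
lemma T_id (n : ℕ) : ∑ j ∈ Finset.Icc 1 n, H (n + 1 - j) * (1/(j:ℝ)) = H (n+1)^2 - H2 (n+1) := by
  induction n with
  | zero => simp [H_one, H2_one]
  | succ n ih =>
    rw [Finset.sum_Icc_succ_top (by omega : 1 ≤ n+1)]
    have hsplit : ∀ j ∈ Finset.Icc 1 n, H (n + 1 + 1 - j) * (1/(j:ℝ))
        = H (n + 1 - j) * (1/(j:ℝ)) + (1/((n:ℝ) + 2 - (j:ℝ))) * (1/(j:ℝ)) := by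
      intro j hj
      simp only [Finset.mem_Icc] at hj
      have h1 : n + 1 + 1 - j = (n + 1 - j) + 1 := by omega
      have h2 : ((n + 1 - j : ℕ) : ℝ) = (n:ℝ) + 1 - j := by
        have : j ≤ n + 1 := by omega
        push_cast [Nat.cast_sub this]; ring
      rw [h1, H_succ, h2]; ring
    rw [Finset.sum_congr rfl hsplit, Finset.sum_add_distrib]
    have hpf : ∀ j ∈ Finset.Icc 1 n, (1/((n:ℝ) + 2 - (j:ℝ))) * (1/(j:ℝ))
        = (1/((n:ℝ)+2)) * (1/(j:ℝ) + 1/((n:ℝ) + 2 - (j:ℝ))) := by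
      intro j hj
      simp only [Finset.mem_Icc] at hj
      have hj1 : (1:ℝ) ≤ (j:ℝ) := by exact_mod_cast hj.1
      have hj2 : (j:ℝ) ≤ n := by exact_mod_cast hj.2
      have hd : (0:ℝ) < (n:ℝ) + 2 - j := by linarith
      have hjpos : (0:ℝ) < j := by linarith
      field_simp
      ring
    rw [Finset.sum_congr rfl hpf, ← Finset.mul_sum, Finset.sum_add_distrib, aux_sum, ih]
    have hHn : ∑ j ∈ Finset.Icc 1 n, 1/(j:ℝ) = H n := by rw [H]
    rw [hHn]
    have e1 : H (n+1+1) = H (n+1) + 1/((n:ℝ)+2) := by rw [H_succ]; push_cast; ring_nf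
    have e2 : H2 (n+1+1) = H2 (n+1) + 1/((n:ℝ)+2)^2 := by rw [H2_succ]; push_cast; ring_nf
    have e3 : H (n+1) = H n + 1/((n:ℝ)+1) := H_succ n
    have h1 : ((n:ℝ)+1) ≠ 0 := by positivity
    have h2 : ((n:ℝ)+2) ≠ 0 := by positivity
    have e4 : n + 1 + 1 - (n + 1) = 1 := by omega
    rw [e1, e2, e3, e4, H_one]
    push_cast
    field_simp
    ring

lemma Tsum (n : ℕ) (hn : 1 ≤ n) :
    ∑ k ∈ Finset.Icc 1 (n-1), H k / ((n:ℝ) - (k:ℝ)) = H n^2 - H2 n := by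
  obtain ⟨m, rfl⟩ : ∃ m, n = m + 1 := ⟨n-1, by omega⟩
  have e0 : m + 1 - 1 = m := by omega
  rw [e0, ← T_id m]
  apply sum_reflect
  intro k hk
  simp only [Finset.mem_Icc] at hk
  have h1 : m + 1 - (m + 1 - k) = k := by omega
  have h2 : ((m + 1 - k : ℕ) : ℝ) = (m:ℝ) + 1 - k := by
    have : k ≤ m + 1 := by omega
    push_cast [Nat.cast_sub this]; ring
  rw [h1, h2]
  push_cast
  ring

lemma Lsum (n : ℕ) (hn : 1 ≤ n) :
    ∑ k ∈ Finset.Icc 1 (n-1), 1 / ((n:ℝ) - (k:ℝ)) = H n - 1/(n:ℝ) := by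
  obtain ⟨m, rfl⟩ : ∃ m, n = m + 1 := ⟨n-1, by omega⟩
  have e0 : m + 1 - 1 = m := by omega
  have key : ∑ k ∈ Finset.Icc 1 m, 1 / (((m:ℝ)+1) - (k:ℝ)) = ∑ j ∈ Finset.Icc 1 m, 1/(j:ℝ) := by
    apply sum_reflect
    intro k hk
    simp only [Finset.mem_Icc] at hk
    have h2 : ((m + 1 - k : ℕ) : ℝ) = (m:ℝ) + 1 - k := by
      have : k ≤ m + 1 := by omega
      push_cast [Nat.cast_sub this]; ring
    rw [h2]
  rw [e0]
  push_cast
  rw [key]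
  have : ∑ j ∈ Finset.Icc 1 m, 1/(j:ℝ) = H m := by rw [H]
  rw [this, H_succ]
  push_cast
  ring

-- numeric facts
lemma H_val4 : H 4 = 25/12 := by
  rw [H, sum_Icc1]; simp [Finset.sum_range_succ]; norm_num

lemma H_21_le : H 21 ≤ 4 := by
  rw [H, sum_Icc1]; simp [Finset.sum_range_succ]; norm_num

lemma H_40_ge : (21:ℝ)/5 ≤ H 40 := by
  rw [H, sum_Icc1]; simp [Finset.sum_range_succ]; norm_num

lemma H2_val2 : H2 2 = 5/4 := by
  rw [H2, sum_Icc1]; simp [Finset.sum_range_succ]; norm_num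

lemma H2_val5 : H2 5 = 5269/3600 := by
  rw [H2, sum_Icc1]; simp [Finset.sum_range_succ]; norm_num

lemma H2_22_ge : (8:ℝ)/5 ≤ H2 22 := by
  rw [H2, sum_Icc1]; simp [Finset.sum_range_succ]; norm_num

lemma H2_tail : ∀ n, 5 ≤ n → H2 n + 1/(n:ℝ) ≤ H2 5 + 1/5 := by
  intro n hn
  induction n, hn using Nat.le_induction with
  | base => norm_num
  | succ n hn ih =>
    have hn0 : (0:ℝ) < n := by exact_mod_cast Nat.lt_of_lt_of_le (by omega) hn
    have hstep : 1/((n:ℝ)+1)^2 + 1/((n:ℝ)+1) ≤ 1/(n:ℝ) := by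
      rw [div_add_div _ _ (by positivity) (by positivity), div_le_div_iff₀ (by positivity) hn0]
      ring_nf
      nlinarith
    have := H2_succ n
    push_cast
    linarith

lemma H2_le (n : ℕ) : H2 n ≤ (5989:ℝ)/3600 := by
  rcases le_or_gt n 5 with h | h
  · calc H2 n ≤ H2 5 := H2_mono h
      _ ≤ 5989/3600 := by rw [H2_val5]; norm_num
  · have h5 : 5 ≤ n := by omega
    have := H2_tail n h5
    have hn : (0:ℝ) < n := by positivity
    have : H2 n ≤ H2 5 + 1/5 - 1/(n:ℝ) := by linarith
    have h1n : (0:ℝ) < 1/(n:ℝ) := by positivity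
    rw [H2_val5] at this
    linarith

lemma keycond (n : ℕ) (hn : 2 ≤ n) : H n ≤ H2 n * (5/8 * H n + 3/8) := by
  have hH0 : 0 ≤ H n := le_of_lt (H_pos (by omega))
  rcases le_or_gt n 4 with h4 | h4
  · have h2 : (5:ℝ)/4 ≤ H2 n := H2_val2 ▸ H2_mono hn
    have hu : H n ≤ 25/12 := H_val4 ▸ H_mono h4
    nlinarith
  · rcases le_or_gt n 21 with h21 | h21
    · have h2 : (5269:ℝ)/3600 ≤ H2 n := H2_val5 ▸ H2_mono (by omega)
      have hu : H n ≤ 4 := le_trans (H_mono h21) H_21_le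
      nlinarith
    · have h2 : (8:ℝ)/5 ≤ H2 n := le_trans H2_22_ge (H2_mono (by omega))
      nlinarith

section Main
variable (R : ℕ → ℝ) (hR1 : R 1 = 1)
  (hrec : ∀ n : ℕ, 2 ≤ n →
      R n = 1 + (1 / H n) * ∑ k ∈ Finset.Icc 1 (n - 1), R k / ((n : ℝ) - (k : ℝ)))

include hR1 hrec in
lemma R_lower : ∀ n : ℕ, 1 ≤ n → (3/10:ℝ) * H n^2 ≤ R n := by
  intro n
  induction n using Nat.strong_induction_on with
  | _ n ih =>
    intro hn
    rcases eq_or_lt_of_le hn with h1 | h2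
    · rw [← h1, hR1, H_one]; norm_num
    · have hn2 : 2 ≤ n := h2
      have hH : 0 < H n := H_pos (by omega)
      rw [hrec n hn2]
      have hterm : ∀ k ∈ Finset.Icc 1 (n-1),
          ((3:ℝ)/10) * (2*H n*H k - H n^2) / ((n:ℝ) - (k:ℝ)) ≤ R k / ((n:ℝ) - (k:ℝ)) := by
        intro k hk
        simp only [Finset.mem_Icc] at hk
        have hd : (0:ℝ) < (n:ℝ) - k := by
          have : (k:ℝ) < (n:ℝ) := by exact_mod_cast (by omega : k < n)
          linarith
        have hnum : ((3:ℝ)/10) * (2*H n*H k - H n^2) ≤ R k := by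
          have h1 := ih k (by omega) hk.1
          nlinarith [sq_nonneg (H n - H k)]
        exact div_le_div_of_nonneg_right hnum hd.le
      have hsum1 := Finset.sum_le_sum hterm
      have hval : ∑ k ∈ Finset.Icc 1 (n-1), ((3:ℝ)/10) * (2*H n*H k - H n^2) / ((n:ℝ) - (k:ℝ))
          = (3/10) * (H n * (H n^2 - 2*H2 n + H n * (1/(n:ℝ)))) := by
        have e : ∀ k ∈ Finset.Icc 1 (n-1), ((3:ℝ)/10) * (2*H n*H k - H n^2) / ((n:ℝ) - (k:ℝ))
            = ((3:ℝ)/10) * (2*H n) * (H k / ((n:ℝ) - (k:ℝ))) - ((3:ℝ)/10) * (H n^2) * (1 / ((n:ℝ) - (k:ℝ))) := by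
          intro k hk; ring
        rw [Finset.sum_congr rfl e, Finset.sum_sub_distrib, ← Finset.mul_sum, ← Finset.mul_sum,
          Tsum n (by omega), Lsum n (by omega)]
        ring
      rw [hval] at hsum1
      have hmul : (3/10) * (H n^2 - 2*H2 n + H n * (1/(n:ℝ)))
          ≤ (1 / H n) * ∑ k ∈ Finset.Icc 1 (n-1), R k / ((n:ℝ) - (k:ℝ)) := by
        calc (3/10) * (H n^2 - 2*H2 n + H n * (1/(n:ℝ)))
            = (1 / H n) * ((3/10) * (H n * (H n^2 - 2*H2 n + H n * (1/(n:ℝ))))) := by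
              field_simp
          _ ≤ (1 / H n) * ∑ k ∈ Finset.Icc 1 (n-1), R k / ((n:ℝ) - (k:ℝ)) := by
              apply mul_le_mul_of_nonneg_left hsum1 (by positivity)
      have hb := H2_le n
      have hpos : (0:ℝ) ≤ H n * (1/(n:ℝ)) := by positivity
      linarith

include hR1 hrec in
lemma R_upper : ∀ n : ℕ, 1 ≤ n → R n ≤ (5/8:ℝ) * H n^2 + (3/8:ℝ) * H n := by
  intro n
  induction n using Nat.strong_induction_on with
  | _ n ih =>
    intro hn
    rcases eq_or_lt_of_le hn with h1 | h2
    · rw [← h1, hR1, H_one]; norm_num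
    · have hn2 : 2 ≤ n := h2
      have hH : 0 < H n := H_pos (by omega)
      rw [hrec n hn2]
      have hterm : ∀ k ∈ Finset.Icc 1 (n-1),
          R k / ((n:ℝ) - (k:ℝ)) ≤ ((5:ℝ)/8 * H n + 3/8) * (H k / ((n:ℝ) - (k:ℝ))) := by
        intro k hk
        simp only [Finset.mem_Icc] at hk
        have hd : (0:ℝ) < (n:ℝ) - k := by
          have : (k:ℝ) < (n:ℝ) := by exact_mod_cast (by omega : k < n)
          linarith
        have hk1 : 1 ≤ k := hk.1
        have hkn : H k ≤ H n := H_mono (by omega)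
        have hk0 : 0 < H k := H_pos hk1
        have hnum : R k ≤ ((5:ℝ)/8 * H n + 3/8) * H k := by
          have h1 := ih k (by omega) hk1
          nlinarith
        rw [mul_div_assoc'] at *
        exact div_le_div_of_nonneg_right hnum hd.le
      have hsum1 := Finset.sum_le_sum hterm
      have hval : ∑ k ∈ Finset.Icc 1 (n-1), ((5:ℝ)/8 * H n + 3/8) * (H k / ((n:ℝ) - (k:ℝ)))
          = ((5:ℝ)/8 * H n + 3/8) * (H n^2 - H2 n) := by
        rw [← Finset.mul_sum, Tsum n (by omega)]
      rw [hval] at hsum1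
      have hstep : (1 / H n) * (((5:ℝ)/8 * H n + 3/8) * (H n^2 - H2 n))
          ≤ (5/8:ℝ) * H n^2 + (3/8:ℝ) * H n - 1 := by
        rw [one_div, ← div_eq_inv_mul, div_le_iff₀ hH]
        nlinarith [keycond n hn2]
      have hmul : (1 / H n) * ∑ k ∈ Finset.Icc 1 (n-1), R k / ((n:ℝ) - (k:ℝ))
          ≤ (1 / H n) * (((5:ℝ)/8 * H n + 3/8) * (H n^2 - H2 n)) :=
        mul_le_mul_of_nonneg_left hsum1 (by positivity)
      linarith

end Main

theorem stmt_16 (R : ℕ → ℝ) (hR1 : R 1 = 1)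
    (hrec : ∀ n : ℕ, 2 ≤ n →
      R n = 1 + (1 / H n) * ∑ k ∈ Finset.Icc 1 (n - 1), R k / ((n : ℝ) - (k : ℝ))) :
    ∀ n : ℕ, 40 ≤ n →
      (100 / 383 : ℝ) * H n ^ 2 ≤ R n ∧ R n ≤ (5 / 7 : ℝ) * H n ^ 2 := by
  intro n hn
  have h1 : 1 ≤ n := by omega
  have hH : 0 < H n := H_pos h1
  have hH40 : (21:ℝ)/5 ≤ H n := le_trans H_40_ge (H_mono hn)
  constructor
  · have := R_lower R hR1 hrec n h1
    nlinarith [sq_nonneg (H n)]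
  · have := R_upper R hR1 hrec n h1
    nlinarith
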